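/- On a finite partially ordered state space X with positive stationary distribution π, the comparison-inequality relation ⪯ on Markov kernels with stationary distribution π (defined by K ⪯ L iff ⟨Kf,g⟩_π ≤ ⟨Lf,g⟩_π for all nonnegative non-increasing f,g) is antisymmetric, hence a partial order. -/
import Mathlib


open Finset
open scoped Classical

variable {X : Type*} [Fintype X] [PartialOrder X]

/-- L²(π) inner product on functions on `X`. -/
def cip (π f g : X → ℝ) : ℝ := ∑ i, π i * (f i * g i)

/-- Comparison-inequality relation: `⟨Kf,g⟩_π ≤ ⟨Lf,g⟩_π` for all nonnegative
non-increasing `f, g`. -/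
def CompIneq (π : X → ℝ) (K L : Matrix X X ℝ) : Prop :=
  ∀ f g : X → ℝ, (∀ i, 0 ≤ f i) → Antitone f → (∀ i, 0 ≤ g i) → Antitone g →
    cip π (K.mulVec f) g ≤ cip π (L.mulVec f) g

lemma aux_zero (v : X → ℝ)
    (h : ∀ a, ∑ i, (if i ≤ a then v i else 0) = 0) : ∀ a, v a = 0 := by
  intro a
  induction a using WellFoundedLT.induction with
  | _ a ih =>
    have h1 : ∀ i : X, (if i ≤ a then v i else 0)
        = (if i = a then v i else 0) + (if i < a then v i else 0) := by
      intro i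
      by_cases he : i = a
      · subst he
        simp
      · by_cases hle : i ≤ a
        · rw [if_pos hle, if_neg he, if_pos (lt_of_le_of_ne hle he), zero_add]
        · rw [if_neg hle, if_neg he, if_neg (fun hlt => hle hlt.le), zero_add]
    have h2 : ∑ i, (if i < a then v i else 0) = 0 :=
      Finset.sum_eq_zero fun i _ => by
        split_ifs with hi
        · exact ih i hi
        · rfl
    have h3 := h a
    rw [Finset.sum_congr rfl (fun i _ => h1 i), Finset.sum_add_distrib, h2, add_zero,
      Finset.sum_ite_eq' univ a v, if_pos (Finset.mem_univ a)] at h3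
    exact h3

theorem stmt_2 (π : X → ℝ) (hπpos : ∀ i, 0 < π i) (hπ1 : ∑ i, π i = 1)
    (K L : Matrix X X ℝ)
    (hKnn : ∀ i j, 0 ≤ K i j) (hKrow : ∀ i, ∑ j, K i j = 1)
    (hKstat : ∀ j, ∑ i, π i * K i j = π j)
    (hLnn : ∀ i j, 0 ≤ L i j) (hLrow : ∀ i, ∑ j, L i j = 1)
    (hLstat : ∀ j, ∑ i, π i * L i j = π j)
    (hKL : CompIneq π K L) (hLK : CompIneq π L K) :
    K = L := by
  set f : X → X → ℝ := fun a j => if j ≤ a then 1 else 0 with hf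
  have hnn : ∀ a i, 0 ≤ f a i := by
    intro a i
    simp only [f]
    split_ifs <;> norm_num
  have hanti : ∀ a, Antitone (f a) := by
    intro a x y hxy
    simp only [f]
    by_cases h1 : y ≤ a
    · rw [if_pos h1, if_pos (hxy.trans h1)]
    · rw [if_neg h1]
      split_ifs <;> norm_num
  have heq : ∀ a b, cip π (K.mulVec (f a)) (f b) = cip π (L.mulVec (f a)) (f b) :=
    fun a b => le_antisymm (hKL _ _ (hnn a) (hanti a) (hnn b) (hanti b))
      (hLK _ _ (hnn a) (hanti a) (hnn b) (hanti b))
  set N : X → X → ℝ := fun i j => π i * (K i j - L i j) with hN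
  have hterm : ∀ a b i, π i * ((∑ j, K i j * f a j) * f b i)
      - π i * ((∑ j, L i j * f a j) * f b i)
      = if i ≤ b then (∑ j, if j ≤ a then N i j else 0) else 0 := by
    intro a b i
    by_cases h : i ≤ b
    · simp only [f, if_pos h, mul_one]
      rw [← mul_sub, ← Finset.sum_sub_distrib, Finset.mul_sum]
      refine Finset.sum_congr rfl fun j _ => ?_
      simp only [N]
      split_ifs with hj <;> simp <;> ring
    · simp [f, if_neg h]
  have hdouble : ∀ a b,
      ∑ i, (if i ≤ b then (∑ j, if j ≤ a then N i j else 0) else 0) = 0 := by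
    intro a b
    have h0 := heq a b
    simp only [cip, Matrix.mulVec, dotProduct] at h0
    calc ∑ i, (if i ≤ b then (∑ j, if j ≤ a then N i j else 0) else 0)
        = ∑ i, (π i * ((∑ j, K i j * f a j) * f b i)
            - π i * ((∑ j, L i j * f a j) * f b i)) :=
          Finset.sum_congr rfl fun i _ => (hterm a b i).symm
      _ = 0 := by rw [Finset.sum_sub_distrib, h0, sub_self]
  have hN1 : ∀ a i, (∑ j, if j ≤ a then N i j else 0) = 0 := fun a i =>
    aux_zero (fun i => ∑ j, if j ≤ a then N i j else 0) (fun b => hdouble a b) i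
  have hN0 : ∀ i j, N i j = 0 := fun i j =>
    aux_zero (N i) (fun a => hN1 a i) j
  ext i j
  have := hN0 i j
  simp only [N] at this
  have h2 : K i j - L i j = 0 := by
    rcases mul_eq_zero.mp this with h | h
    · exact absurd h (hπpos i).ne'
    · exact h
  linarith
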